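/- arXiv:math/0202039 — 2 statements merged into one kernel-verified Lean document; each statement's English description precedes it below -/
import Mathlib

section
/- Let S →(f) T →(g) R be maps of finite sets such that f is injective and the image of g∘f has at most one element. Then the images of f_* : 𝔤(S) → 𝔤(T) and g^* : 𝔤(R) → 𝔤(T) commute elementwise: for all a ∈ 𝔤(S) and b ∈ 𝔤(R), [f_*(a), g^*(b)] = 0 in 𝔤(T). -/
noncomputable section
attribute [local instance] Classical.propDecidable

/-- Generators `t_{ij}` of the Drinfeld–Kohno Lie algebra: pairs of distinct elements. -/
def DKGen (T : Type) : Type := {p : T × T // p.1 ≠ p.2}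

variable (k : Type) [Field k] [CharZero k]

/-- The relations: `t_{ij} = t_{ji}`, `[t_{ij}, t_{kl}] = 0` for `i,j,k,l` pairwise distinct,
and `[t_{ij}, t_{ik} + t_{jk}] = 0` for `i,j,k` pairwise distinct. -/
def DKRel (T : Type) : Set (FreeLieAlgebra k (DKGen T)) :=
  {x | (∃ (i j : T) (h : i ≠ j),
          x = FreeLieAlgebra.of k (⟨(i, j), h⟩ : DKGen T)
              - FreeLieAlgebra.of k (⟨(j, i), h.symm⟩ : DKGen T))
     ∨ (∃ (i j l m : T) (hij : i ≠ j) (hlm : l ≠ m),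
          i ≠ l ∧ i ≠ m ∧ j ≠ l ∧ j ≠ m ∧
          x = ⁅FreeLieAlgebra.of k (⟨(i, j), hij⟩ : DKGen T),
               FreeLieAlgebra.of k (⟨(l, m), hlm⟩ : DKGen T)⁆)
     ∨ (∃ (i j l : T) (hij : i ≠ j) (hil : i ≠ l) (hjl : j ≠ l),
          x = ⁅FreeLieAlgebra.of k (⟨(i, j), hij⟩ : DKGen T),
               FreeLieAlgebra.of k (⟨(i, l), hil⟩ : DKGen T)
               + FreeLieAlgebra.of k (⟨(j, l), hjl⟩ : DKGen T)⁆)}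

/-- The Lie ideal generated by the relations. -/
def DKIdeal (T : Type) : LieIdeal k (FreeLieAlgebra k (DKGen T)) :=
  LieSubmodule.lieSpan k _ (DKRel k T)

/-- The Drinfeld–Kohno Lie algebra `𝔤(T)`. -/
abbrev DK (T : Type) := FreeLieAlgebra k (DKGen T) ⧸ DKIdeal k T

/-- The generator `t_{ij} ∈ 𝔤(T)` (defined to be `0` when `i = j`). -/
def DKt (T : Type) (i j : T) : DK k T :=
  if h : i = j then 0
  else LieSubmodule.Quotient.mk (N := DKIdeal k T) (FreeLieAlgebra.of k (⟨(i, j), h⟩ : DKGen T))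

/-- `F` is the direct image homomorphism `f_* : 𝔤(S) → 𝔤(T)` along `f : S → T`,
i.e. `F (t_{ij}) = t_{f(i) f(j)}` for all distinct `i, j`. -/
def IsDirectImage {S T : Type} (f : S → T) (F : DK k S →ₗ⁅k⁆ DK k T) : Prop :=
  ∀ i j : S, i ≠ j → F (DKt k S i j) = DKt k T (f i) (f j)

/-- `G` is the inverse image homomorphism `f^* : 𝔤(T) → 𝔤(S)` along `f : S → T`, i.e.
`G (t_{ij}) = ∑_{f(p) = i, f(q) = j} t_{pq}` for all distinct `i, j`. -/
def IsInverseImage {S T : Type} [Fintype S] (f : S → T) (G : DK k T →ₗ⁅k⁆ DK k S) : Prop :=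
  ∀ i j : T, i ≠ j →
    G (DKt k T i j) =
      ∑ p ∈ Finset.univ.filter (fun p => f p = i),
        ∑ q ∈ Finset.univ.filter (fun q => f q = j), DKt k S p q


set_option linter.unusedSectionVars false
section Aux

variable {T : Type}

theorem DK_lie_sum {A : Type} (x : DK k T) (s : Finset A) (f : A → DK k T) :
    ⁅x, ∑ p ∈ s, f p⁆ = ∑ p ∈ s, ⁅x, f p⁆ :=
  map_sum (LieAlgebra.ad k (DK k T) x) f s

/-- The quotient map as a morphism of Lie algebras. -/
def DKpi (T : Type) : FreeLieAlgebra k (DKGen T) →ₗ⁅k⁆ DK k T :=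
  { (LieSubmodule.Quotient.mk' (DKIdeal k T)).toLinearMap with
    map_lie' := fun {x y} => LieSubmodule.Quotient.mk_bracket (DKIdeal k T) x y }

theorem DK_rel_zero {x : FreeLieAlgebra k (DKGen T)} (hx : x ∈ DKRel k T) :
    DKpi k T x = 0 :=
  LieSubmodule.Quotient.mk_eq_zero'.mpr (LieSubmodule.subset_lieSpan hx)

theorem DKt_eq {i j : T} (h : i ≠ j) :
    DKt k T i j = DKpi k T (FreeLieAlgebra.of k (⟨(i, j), h⟩ : DKGen T)) := by
  rw [DKt, dif_neg h]; rfl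

theorem DKt_symm (i j : T) : DKt k T i j = DKt k T j i := by
  by_cases h : i = j
  · subst h; rfl
  · have h2 := DK_rel_zero k (T := T) (Or.inl ⟨i, j, h, rfl⟩)
    replace h2 := (map_sub (DKpi k T) _ _).symm.trans h2
    rw [DKt_eq k h, DKt_eq k (Ne.symm h)]
    exact sub_eq_zero.mp h2

theorem DKt_comm4 {i j l m : T} (hij : i ≠ j) (hlm : l ≠ m) (hil : i ≠ l)
    (him : i ≠ m) (hjl : j ≠ l) (hjm : j ≠ m) :
    ⁅DKt k T i j, DKt k T l m⁆ = 0 := by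
  rw [DKt_eq k hij, DKt_eq k hlm, ← LieHom.map_lie]
  exact DK_rel_zero k (Or.inr (Or.inl ⟨i, j, l, m, hij, hlm, hil, him, hjl, hjm, rfl⟩))

theorem DKt_comm3 {i j l : T} (hij : i ≠ j) (hil : i ≠ l) (hjl : j ≠ l) :
    ⁅DKt k T i j, DKt k T i l + DKt k T j l⁆ = 0 := by
  rw [DKt_eq k hij, DKt_eq k hil, DKt_eq k hjl, ← map_add (DKpi k T), ← LieHom.map_lie]
  exact DK_rel_zero k (Or.inr (Or.inr ⟨i, j, l, hij, hil, hjl, rfl⟩))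

theorem DKpi_of (p : DKGen T) :
    DKpi k T (FreeLieAlgebra.of k p) = DKt k T p.1.1 p.1.2 := by
  rw [DKt_eq k p.2]; rfl

theorem DK_gen (L : LieSubalgebra k (DK k T))
    (h : ∀ i j : T, i ≠ j → DKt k T i j ∈ L) (x : DK k T) : x ∈ L := by
  obtain ⟨y, rfl⟩ := LieSubmodule.Quotient.surjective_mk' (DKIdeal k T) x
  let φ : FreeLieAlgebra k (DKGen T) →ₗ⁅k⁆ L :=
    FreeLieAlgebra.lift k fun p =>
      (⟨DKpi k T (FreeLieAlgebra.of k p), by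
        rw [DKpi_of]; exact h p.1.1 p.1.2 p.2⟩ : L)
  have hφ : (L.incl.comp φ) = DKpi k T := by
    apply FreeLieAlgebra.hom_ext
    intro p
    simp only [LieHom.comp_apply, φ, FreeLieAlgebra.lift_of_apply, LieSubalgebra.coe_incl]
  have h1 : (LieSubmodule.Quotient.mk' (DKIdeal k T)) y = DKpi k T y := rfl
  rw [h1, ← hφ]
  exact (φ y).2

theorem DK_lie_sum_peel {a b q : T} (hab : a ≠ b) (haq : a ≠ q) (hbq : b ≠ q)
    (s : Finset T) (ha : a ∈ s) (hb : b ∈ s) (hs : ∀ p ∈ s, p ≠ q) :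
    ⁅DKt k T a b, ∑ p ∈ s, DKt k T p q⁆ = 0 := by
  have h1 := Finset.add_sum_erase s (fun p => DKt k T p q) ha
  have h2 := Finset.add_sum_erase (s.erase a) (fun p => DKt k T p q)
    (Finset.mem_erase.mpr ⟨Ne.symm hab, hb⟩)
  have hsum : ∑ p ∈ s, DKt k T p q
      = (DKt k T a q + DKt k T b q) + ∑ p ∈ (s.erase a).erase b, DKt k T p q := by
    rw [← h1, ← h2]; exact (add_assoc _ _ _).symm
  rw [hsum, lie_add, DKt_comm3 k hab haq hbq, zero_add, DK_lie_sum]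
  apply Finset.sum_eq_zero
  intro p hp
  obtain ⟨hpb, hpa, hps⟩ : p ≠ b ∧ p ≠ a ∧ p ∈ s := by
    have h1 := Finset.mem_erase.mp hp
    have h2 := Finset.mem_erase.mp h1.2
    exact ⟨h1.1, h2.1, h2.2⟩
  exact DKt_comm4 k hab (hs p hps) (Ne.symm hpa) haq (Ne.symm hpb) hbq

end Aux

/-- if `f : S → T` is injective and the image of `g ∘ f` has at most one
element, then the images of `f_* : 𝔤(S) → 𝔤(T)` and `g^* : 𝔤(R) → 𝔤(T)` commute
elementwise. -/
theorem directImage_commutes_inverseImage (S T R : Type)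
    [Fintype S] [Fintype T] [Fintype R]
    (f : S → T) (hf : Function.Injective f) (g : T → R)
    (hgf : (Set.range (g ∘ f)).Subsingleton)
    (F : DK k S →ₗ⁅k⁆ DK k T) (hF : IsDirectImage k f F)
    (G : DK k R →ₗ⁅k⁆ DK k T) (hG : IsInverseImage k g G) :
    ∀ (a : DK k S) (b : DK k R), ⁅F a, G b⁆ = 0 := by
  
  have hr : ∀ i j : S, g (f i) = g (f j) := fun i j => hgf ⟨i, rfl⟩ ⟨j, rfl⟩
  have key : ∀ (i j : S), i ≠ j → ∀ (kk ll : R), kk ≠ ll →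
      ⁅DKt k T (f i) (f j),
        ∑ p ∈ Finset.univ.filter (fun p => g p = kk),
          ∑ q ∈ Finset.univ.filter (fun q => g q = ll), DKt k T p q⁆ = 0 := by
    intro i j hij kk ll hkl
    set a := f i with ha
    set b := f j with hb
    have hab : a ≠ b := fun h => hij (hf h)
    have hgab : g a = g b := hr i j
    by_cases hka : kk = g a
    · have hla : ll ≠ g a := fun h => hkl (hka.trans h.symm)
      rw [Finset.sum_comm, DK_lie_sum]
      apply Finset.sum_eq_zero
      intro q hq
      have hgq : g q = ll := (Finset.mem_filter.mp hq).2
      have hqa : q ≠ a := fun h => hla (by rw [← h, hgq])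
      have hqb : q ≠ b := fun h => hla (by rw [hgab, ← h, hgq])
      exact DK_lie_sum_peel k hab (Ne.symm hqa) (Ne.symm hqb) _
        (Finset.mem_filter.mpr ⟨Finset.mem_univ _, hka.symm⟩)
        (Finset.mem_filter.mpr ⟨Finset.mem_univ _, (hgab.symm.trans hka.symm : g b = kk)⟩)
        (fun p hp h => hkl (by rw [← (Finset.mem_filter.mp hp).2, h, hgq]))
    · by_cases hla : ll = g a
      · have heq : ∀ p ∈ Finset.univ.filter (fun p => g p = kk),
            ∑ q ∈ Finset.univ.filter (fun q => g q = ll), DKt k T p q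
            = ∑ q ∈ Finset.univ.filter (fun q => g q = ll), DKt k T q p :=
          fun p _ => Finset.sum_congr rfl fun q _ => DKt_symm k p q
        rw [Finset.sum_congr rfl heq, DK_lie_sum]
        apply Finset.sum_eq_zero
        intro p hp
        have hgp : g p = kk := (Finset.mem_filter.mp hp).2
        have hpa : a ≠ p := fun h => hka (by rw [h, hgp])
        have hpb : b ≠ p := fun h => hka (by rw [hgab, h, hgp])
        exact DK_lie_sum_peel k hab hpa hpb _
          (Finset.mem_filter.mpr ⟨Finset.mem_univ _, hla.symm⟩)
          (Finset.mem_filter.mpr ⟨Finset.mem_univ _, (hgab.symm.trans hla.symm : g b = ll)⟩)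
          (fun q hq h => hkl (by rw [← hgp, ← h]; exact (Finset.mem_filter.mp hq).2))
      · rw [DK_lie_sum]
        apply Finset.sum_eq_zero
        intro p hp
        rw [DK_lie_sum]
        apply Finset.sum_eq_zero
        intro q hq
        have hgp : g p = kk := (Finset.mem_filter.mp hp).2
        have hgq : g q = ll := (Finset.mem_filter.mp hq).2
        have hpa : a ≠ p := fun h => hka (by rw [h, hgp])
        have hpb : b ≠ p := fun h => hka (by rw [hgab, h, hgp])
        have hqa : a ≠ q := fun h => hla (by rw [h, hgq])
        have hqb : b ≠ q := fun h => hla (by rw [hgab, h, hgq])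
        have hpq : p ≠ q := fun h => hkl (by rw [← hgp, h, hgq])
        exact DKt_comm4 k hab hpq hpa hqa hpb hqb
  have step_b : ∀ (i j : S), i ≠ j → ∀ b : DK k R, ⁅F (DKt k S i j), G b⁆ = 0 := by
    intro i j hij
    set x := F (DKt k S i j) with hx
    let L : LieSubalgebra k (DK k R) :=
      { carrier := {b | ⁅x, G b⁆ = 0}
        add_mem' := fun {y z} hy hz => by
          simp only [Set.mem_setOf_eq] at *
          rw [map_add, lie_add, hy, hz, add_zero]
        zero_mem' := by simp only [Set.mem_setOf_eq, map_zero, lie_zero]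
        smul_mem' := fun c y hy => by
          simp only [Set.mem_setOf_eq] at *
          rw [map_smul, lie_smul, hy, smul_zero]
        lie_mem' := fun {y z} hy hz => by
          simp only [Set.mem_setOf_eq] at *
          rw [LieHom.map_lie, leibniz_lie, hy, hz, zero_lie, lie_zero, add_zero] }
    intro b
    refine DK_gen k L (fun kk ll hkl => ?_) b
    show ⁅x, G (DKt k R kk ll)⁆ = 0
    rw [hG kk ll hkl, hx, hF i j hij]
    exact key i j hij kk ll hkl
  intro a b
  let L' : LieSubalgebra k (DK k S) :=
    { carrier := {a | ⁅F a, G b⁆ = 0}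
      add_mem' := fun {y z} hy hz => by
        simp only [Set.mem_setOf_eq] at *
        rw [map_add, add_lie, hy, hz, add_zero]
      zero_mem' := by simp only [Set.mem_setOf_eq, map_zero, zero_lie]
      smul_mem' := fun c y hy => by
        simp only [Set.mem_setOf_eq] at *
        rw [map_smul, smul_lie, hy, smul_zero]
      lie_mem' := fun {y z} hy hz => by
        simp only [Set.mem_setOf_eq] at *
        rw [LieHom.map_lie, lie_lie, hy, hz, lie_zero, lie_zero, sub_zero] }
  exact DK_gen k L' (fun i j hij => step_b i j hij b) a
end
end

section
/- Parallel operad associativity for the collection 𝔤(·): let X, Y, Z be finite sets and y, z ∈ X with y ≠ z. Then for all a ∈ 𝔤(X), b ∈ 𝔤(Y), c ∈ 𝔤(Z), under the canonical bijection between (((X ∖ {y}) ⊔ Y) ∖ {z}) ⊔ Z and (((X ∖ {z}) ⊔ Z) ∖ {y}) ⊔ Y (both identified with (X ∖ {y, z}) ⊔ Y ⊔ Z), one has ∘_z(∘_y(a, b), c) = ∘_y(∘_z(a, c), b), where the insertion maps ∘ are defined via p^* and i_*. -/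
noncomputable section
attribute [local instance] Classical.propDecidable

variable (k : Type) [Field k] [CharZero k]

/-- The set `Z = (X ∖ {x}) ⊔ Y` obtained by inserting `Y` at the position `x ∈ X`. -/
abbrev Ins (X : Type) (x : X) (Y : Type) : Type := {a : X // a ≠ x} ⊕ Y

/-- The natural inclusion `i : Y → Z`. -/
abbrev insI (X : Type) (x : X) (Y : Type) : Y → Ins X x Y := Sum.inr

/-- The projection `p : Z → X`, restricting to the inclusion on `X ∖ {x}` and sending all
of `Y` to `x`. -/
abbrev insP (X : Type) (x : X) (Y : Type) : Ins X x Y → X :=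
  Sum.elim Subtype.val (fun _ => x)

/-- The canonical bijection
`(((X ∖ {y}) ⊔ Y) ∖ {z}) ⊔ Z ≅ (((X ∖ {z}) ⊔ Z) ∖ {y}) ⊔ Y`
(both sides being identified with `(X ∖ {y, z}) ⊔ Y ⊔ Z`). -/
def parAssocMap (X Y Z : Type) (y z : X) (hyz : y ≠ z) :
    Ins (Ins X y Y) (Sum.inl ⟨z, Ne.symm hyz⟩ : Ins X y Y) Z →
      Ins (Ins X z Z) (Sum.inl ⟨y, hyz⟩ : Ins X z Z) Y
  | Sum.inr w => Sum.inl ⟨Sum.inr w, fun e => by cases e⟩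
  | Sum.inl ⟨Sum.inr v, _⟩ => Sum.inr v
  | Sum.inl ⟨Sum.inl ⟨u, hu⟩, h⟩ =>
      Sum.inl ⟨Sum.inl ⟨u, fun e => h (by subst e; rfl)⟩,
        fun e => hu (congrArg Subtype.val (Sum.inl.inj e))⟩

/-- The quotient map as a Lie algebra homomorphism. -/
def DKmk (T : Type) : FreeLieAlgebra k (DKGen T) →ₗ⁅k⁆ DK k T where
  toFun := LieSubmodule.Quotient.mk (N := DKIdeal k T)
  map_add' := fun _ _ => rfl
  map_smul' := fun _ _ => rfl
  map_lie' := fun {x y} => LieSubmodule.Quotient.mk_bracket _ x y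

lemma DK_homext {S : Type} {L : Type} [LieRing L] [LieAlgebra k L]
    (F G : DK k S →ₗ⁅k⁆ L)
    (h : ∀ i j : S, i ≠ j → F (DKt k S i j) = G (DKt k S i j)) (x : DK k S) :
    F x = G x := by
  obtain ⟨m, rfl⟩ := LieSubmodule.Quotient.surjective_mk' (DKIdeal k S) x
  have key : F.comp (DKmk k S) = G.comp (DKmk k S) := by
    apply FreeLieAlgebra.hom_ext
    rintro ⟨⟨i, j⟩, hij⟩
    have hg := h i j hij
    have e : DKt k S i j
        = LieSubmodule.Quotient.mk (N := DKIdeal k S)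
            (FreeLieAlgebra.of k (⟨(i, j), hij⟩ : DKGen S)) := by
      rw [DKt, dif_neg hij]
    rw [e] at hg
    exact hg
  exact DFunLike.congr_fun key m

lemma lieHom_map_sum {L1 L2 : Type} [LieRing L1] [LieAlgebra k L1]
    [LieRing L2] [LieAlgebra k L2] (f : L1 →ₗ⁅k⁆ L2) {ι : Type} (s : Finset ι) (g : ι → L1) :
    f (∑ i ∈ s, g i) = ∑ i ∈ s, f (g i) := by
  exact map_sum f.toLinearMap g s

lemma fib_collapse {α β γ : Type} [Fintype α] [Fintype β] {M : Type} [AddCommMonoid M]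
    (fB : α → β) (fA : β → γ) (j : γ) (F : α → M) :
    ∑ q ∈ Finset.univ.filter (fun q => fA q = j),
      ∑ v ∈ Finset.univ.filter (fun v => fB v = q), F v
      = ∑ v ∈ Finset.univ.filter (fun v => fA (fB v) = j), F v := by
  have hbi : (Finset.univ.filter (fun q : β => fA q = j)).biUnion
      (fun q => Finset.univ.filter (fun v => fB v = q))
      = Finset.univ.filter (fun v => fA (fB v) = j) := by
    ext v
    simp only [Finset.mem_biUnion, Finset.mem_filter, Finset.mem_univ, true_and]
    constructor
    · rintro ⟨q, hq, rfl⟩; exact hq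
    · intro hv; exact ⟨fB v, hv, rfl⟩
  rw [← hbi, Finset.sum_biUnion]
  intro q _ q' _ hqq'
  refine Finset.disjoint_left.2 fun v hv hv' => hqq' ?_
  have h1 := (Finset.mem_filter.1 hv).2
  have h2 := (Finset.mem_filter.1 hv').2
  rw [← h1, ← h2]

lemma double_fib_collapse {α β γ : Type} [Fintype α] [Fintype β] {M : Type} [AddCommMonoid M]
    (fB : α → β) (fA : β → γ) (i j : γ) (g : α → α → M) :
    ∑ p ∈ Finset.univ.filter (fun p => fA p = i),
      ∑ q ∈ Finset.univ.filter (fun q => fA q = j),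
        ∑ u ∈ Finset.univ.filter (fun u => fB u = p),
          ∑ v ∈ Finset.univ.filter (fun v => fB v = q), g u v
      = ∑ u ∈ Finset.univ.filter (fun u => fA (fB u) = i),
          ∑ v ∈ Finset.univ.filter (fun v => fA (fB v) = j), g u v := by
  calc
    ∑ p ∈ Finset.univ.filter (fun p => fA p = i),
      ∑ q ∈ Finset.univ.filter (fun q => fA q = j),
        ∑ u ∈ Finset.univ.filter (fun u => fB u = p),
          ∑ v ∈ Finset.univ.filter (fun v => fB v = q), g u v
        = ∑ p ∈ Finset.univ.filter (fun p => fA p = i),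
            ∑ u ∈ Finset.univ.filter (fun u => fB u = p),
              ∑ q ∈ Finset.univ.filter (fun q => fA q = j),
                ∑ v ∈ Finset.univ.filter (fun v => fB v = q), g u v := by
          exact Finset.sum_congr rfl fun p _ => Finset.sum_comm
    _ = ∑ p ∈ Finset.univ.filter (fun p => fA p = i),
          ∑ u ∈ Finset.univ.filter (fun u => fB u = p),
            ∑ v ∈ Finset.univ.filter (fun v => fA (fB v) = j), g u v := by
          refine Finset.sum_congr rfl fun p _ => Finset.sum_congr rfl fun u _ => ?_
          exact fib_collapse fB fA j (g u)
    _ = _ := fib_collapse fB fA i _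

lemma reindex1 {α β γ : Type} [Fintype α] [Fintype β] {M : Type} [AddCommMonoid M]
    (φ : α → β) (ψ : β → α) (h1 : ∀ a, ψ (φ a) = a) (h2 : ∀ b, φ (ψ b) = b)
    (f1 : α → γ) (f2 : β → γ) (hf : ∀ a, f2 (φ a) = f1 a) (i : γ) (F : β → M) :
    ∑ u ∈ Finset.univ.filter (fun u => f1 u = i), F (φ u)
      = ∑ u ∈ Finset.univ.filter (fun u => f2 u = i), F u := by
  refine Finset.sum_nbij' φ ψ ?_ ?_ ?_ ?_ ?_
  · intro a ha
    simp only [Finset.mem_filter, Finset.mem_univ, true_and] at ha ⊢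
    rw [hf]; exact ha
  · intro b hb
    simp only [Finset.mem_filter, Finset.mem_univ, true_and] at hb ⊢
    rw [← hf (ψ b), h2]; exact hb
  · intro a _; exact h1 a
  · intro b _; exact h2 b
  · intro a _; rfl

/-- The inverse of `parAssocMap`. -/
def parAssocInv (X Y Z : Type) (y z : X) (hyz : y ≠ z) :
    Ins (Ins X z Z) (Sum.inl ⟨y, hyz⟩ : Ins X z Z) Y →
      Ins (Ins X y Y) (Sum.inl ⟨z, Ne.symm hyz⟩ : Ins X y Y) Z
  | Sum.inr w => Sum.inl ⟨Sum.inr w, fun e => by cases e⟩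
  | Sum.inl ⟨Sum.inr v, _⟩ => Sum.inr v
  | Sum.inl ⟨Sum.inl ⟨u, hu⟩, h⟩ =>
      Sum.inl ⟨Sum.inl ⟨u, fun e => h (by subst e; rfl)⟩,
        fun e => hu (congrArg Subtype.val (Sum.inl.inj e))⟩

lemma parAssoc_left_inv (X Y Z : Type) (y z : X) (hyz : y ≠ z) (a) :
    parAssocInv X Y Z y z hyz (parAssocMap X Y Z y z hyz a) = a := by
  rcases a with ⟨⟨u, hu⟩ | v, h⟩ | w <;> rfl

lemma parAssoc_right_inv (X Y Z : Type) (y z : X) (hyz : y ≠ z) (b) :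
    parAssocMap X Y Z y z hyz (parAssocInv X Y Z y z hyz b) = b := by
  rcases b with ⟨⟨u, hu⟩ | v, h⟩ | w <;> rfl

lemma parAssoc_proj (X Y Z : Type) (y z : X) (hyz : y ≠ z) (a) :
    insP X z Z (insP (Ins X z Z) (Sum.inl ⟨y, hyz⟩) Y (parAssocMap X Y Z y z hyz a))
      = insP X y Y (insP (Ins X y Y) (Sum.inl ⟨z, Ne.symm hyz⟩) Z a) := by
  rcases a with ⟨⟨u, hu⟩ | v, h⟩ | w <;> rfl

lemma invImage_comp {S T U : Type} [Fintype S] [Fintype T]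
    (f : S → T) (g : T → U)
    (F : DK k U →ₗ⁅k⁆ DK k T) (hF : IsInverseImage k g F)
    (G : DK k T →ₗ⁅k⁆ DK k S) (hG : IsInverseImage k f G)
    (i j : U) (hij : i ≠ j) :
    G (F (DKt k U i j)) =
      ∑ u ∈ Finset.univ.filter (fun u => g (f u) = i),
        ∑ v ∈ Finset.univ.filter (fun v => g (f v) = j), DKt k S u v := by
  rw [hF i j hij, lieHom_map_sum]
  rw [← double_fib_collapse f g i j (fun u v => DKt k S u v)]
  refine Finset.sum_congr rfl fun p hp => ?_
  rw [lieHom_map_sum]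
  refine Finset.sum_congr rfl fun q hq => ?_
  have hp' := (Finset.mem_filter.1 hp).2
  have hq' := (Finset.mem_filter.1 hq).2
  have hpq : p ≠ q := fun e => hij (by rw [← hp', ← hq', e])
  exact hG p q hpq

/-- parallel operad associativity for `𝔤(·)`:
`∘_z(∘_y(a, b), c) = ∘_y(∘_z(a, c), b)` under the canonical bijection, where each
insertion map is `∘_x(a, b) = p^*(a) + i_*(b)`. -/
theorem insertion_par_assoc (X Y Z : Type) [Fintype X] [Fintype Y] [Fintype Z]
    (y z : X) (hyz : y ≠ z)
    (PA : DK k X →ₗ⁅k⁆ DK k (Ins X y Y))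
    (hPA : IsInverseImage k (insP X y Y) PA)
    (IA : DK k Y →ₗ⁅k⁆ DK k (Ins X y Y))
    (hIA : IsDirectImage k (insI X y Y) IA)
    (PB : DK k (Ins X y Y) →ₗ⁅k⁆
       DK k (Ins (Ins X y Y) (Sum.inl ⟨z, Ne.symm hyz⟩ : Ins X y Y) Z))
    (hPB : IsInverseImage k (insP (Ins X y Y) (Sum.inl ⟨z, Ne.symm hyz⟩) Z) PB)
    (IB : DK k Z →ₗ⁅k⁆
       DK k (Ins (Ins X y Y) (Sum.inl ⟨z, Ne.symm hyz⟩ : Ins X y Y) Z))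
    (hIB : IsDirectImage k (insI (Ins X y Y) (Sum.inl ⟨z, Ne.symm hyz⟩) Z) IB)
    (PA' : DK k X →ₗ⁅k⁆ DK k (Ins X z Z))
    (hPA' : IsInverseImage k (insP X z Z) PA')
    (IA' : DK k Z →ₗ⁅k⁆ DK k (Ins X z Z))
    (hIA' : IsDirectImage k (insI X z Z) IA')
    (PB' : DK k (Ins X z Z) →ₗ⁅k⁆
       DK k (Ins (Ins X z Z) (Sum.inl ⟨y, hyz⟩ : Ins X z Z) Y))
    (hPB' : IsInverseImage k (insP (Ins X z Z) (Sum.inl ⟨y, hyz⟩) Y) PB')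
    (IB' : DK k Y →ₗ⁅k⁆
       DK k (Ins (Ins X z Z) (Sum.inl ⟨y, hyz⟩ : Ins X z Z) Y))
    (hIB' : IsDirectImage k (insI (Ins X z Z) (Sum.inl ⟨y, hyz⟩) Y) IB')
    (E : DK k (Ins (Ins X y Y) (Sum.inl ⟨z, Ne.symm hyz⟩ : Ins X y Y) Z) →ₗ⁅k⁆
       DK k (Ins (Ins X z Z) (Sum.inl ⟨y, hyz⟩ : Ins X z Z) Y))
    (hE : IsDirectImage k (parAssocMap X Y Z y z hyz) E) :
    ∀ (a : DK k X) (b : DK k Y) (c : DK k Z),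
      E (PB (PA a + IA b) + IB c) = PB' (PA' a + IA' c) + IB' b := by
  have hli := parAssoc_left_inv X Y Z y z hyz
  have hri := parAssoc_right_inv X Y Z y z hyz
  have hproj := parAssoc_proj X Y Z y z hyz
  -- singleton fibers over `Sum.inr`
  have fibsing1 : ∀ b : Y,
      @Finset.filter _
        (fun u : Ins (Ins X y Y) (Sum.inl ⟨z, Ne.symm hyz⟩ : Ins X y Y) Z =>
          insP (Ins X y Y) (Sum.inl ⟨z, Ne.symm hyz⟩) Z u = Sum.inr b)
        (fun _ => Classical.propDecidable _) Finset.univ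
      = {Sum.inl ⟨Sum.inr b, fun e => by cases e⟩} := by
    intro b
    ext u
    simp only [Finset.mem_filter, Finset.mem_univ, true_and, Finset.mem_singleton]
    constructor
    · rcases u with ⟨v, hv⟩ | w
      · intro h
        have hv2 : v = Sum.inr b := h
        subst hv2; rfl
      · intro h
        exact absurd h (fun e => by cases e)
    · rintro rfl; rfl
  have fibsing2 : ∀ c : Z,
      @Finset.filter _
        (fun u : Ins (Ins X z Z) (Sum.inl ⟨y, hyz⟩ : Ins X z Z) Y =>
          insP (Ins X z Z) (Sum.inl ⟨y, hyz⟩) Y u = Sum.inr c)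
        (fun _ => Classical.propDecidable _) Finset.univ
      = {Sum.inl ⟨Sum.inr c, fun e => by cases e⟩} := by
    intro c
    ext u
    simp only [Finset.mem_filter, Finset.mem_univ, true_and, Finset.mem_singleton]
    constructor
    · rcases u with ⟨v, hv⟩ | w
      · intro h
        have hv2 : v = Sum.inr c := h
        subst hv2; rfl
      · intro h
        exact absurd h (fun e => by cases e)
    · rintro rfl; rfl
  -- part A
  have hA : ∀ a : DK k X, E (PB (PA a)) = PB' (PA' a) := by
    intro a
    refine DK_homext k ((E.comp PB).comp PA) (PB'.comp PA') (fun i j hij => ?_) a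
    show E (PB (PA (DKt k X i j))) = PB' (PA' (DKt k X i j))
    rw [invImage_comp k (insP (Ins X y Y) (Sum.inl ⟨z, Ne.symm hyz⟩) Z) (insP X y Y)
      PA hPA PB hPB i j hij]
    rw [invImage_comp k (insP (Ins X z Z) (Sum.inl ⟨y, hyz⟩) Y) (insP X z Z)
      PA' hPA' PB' hPB' i j hij]
    rw [lieHom_map_sum]
    have step1 : ∀ u ∈ Finset.univ.filter (fun u =>
        insP X y Y (insP (Ins X y Y) (Sum.inl ⟨z, Ne.symm hyz⟩) Z u) = i),
        E (∑ v ∈ Finset.univ.filter (fun v =>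
            insP X y Y (insP (Ins X y Y) (Sum.inl ⟨z, Ne.symm hyz⟩) Z v) = j),
          DKt k _ u v)
        = ∑ v ∈ Finset.univ.filter (fun v =>
            insP X y Y (insP (Ins X y Y) (Sum.inl ⟨z, Ne.symm hyz⟩) Z v) = j),
          DKt k _ (parAssocMap X Y Z y z hyz u) (parAssocMap X Y Z y z hyz v) := by
      intro u hu
      rw [lieHom_map_sum]
      refine Finset.sum_congr rfl fun v hv => ?_
      have hu' := (Finset.mem_filter.1 hu).2
      have hv' := (Finset.mem_filter.1 hv).2
      have huv : u ≠ v := fun e => hij (by rw [← hu', ← hv', e])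
      exact hE u v huv
    rw [Finset.sum_congr rfl step1]
    have inner : ∀ u, ∑ v ∈ Finset.univ.filter (fun v =>
          insP X y Y (insP (Ins X y Y) (Sum.inl ⟨z, Ne.symm hyz⟩) Z v) = j),
        DKt k _ (parAssocMap X Y Z y z hyz u) (parAssocMap X Y Z y z hyz v)
        = ∑ v ∈ Finset.univ.filter (fun v =>
            insP X z Z (insP (Ins X z Z) (Sum.inl ⟨y, hyz⟩) Y v) = j),
          DKt k _ (parAssocMap X Y Z y z hyz u) v := by
      intro u
      exact reindex1 (parAssocMap X Y Z y z hyz) (parAssocInv X Y Z y z hyz) hli hri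
        (fun v => insP X y Y (insP (Ins X y Y) (Sum.inl ⟨z, Ne.symm hyz⟩) Z v))
        (fun v => insP X z Z (insP (Ins X z Z) (Sum.inl ⟨y, hyz⟩) Y v)) hproj j
        (DKt k _ (parAssocMap X Y Z y z hyz u))
    rw [Finset.sum_congr rfl (fun u _ => inner u)]
    exact reindex1 (parAssocMap X Y Z y z hyz) (parAssocInv X Y Z y z hyz) hli hri
      (fun v => insP X y Y (insP (Ins X y Y) (Sum.inl ⟨z, Ne.symm hyz⟩) Z v))
      (fun v => insP X z Z (insP (Ins X z Z) (Sum.inl ⟨y, hyz⟩) Y v)) hproj i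
      (fun u => ∑ v ∈ Finset.univ.filter (fun v =>
        insP X z Z (insP (Ins X z Z) (Sum.inl ⟨y, hyz⟩) Y v) = j), DKt k _ u v)
  -- part B
  have hB : ∀ b : DK k Y, E (PB (IA b)) = IB' b := by
    intro b
    refine DK_homext k ((E.comp PB).comp IA) IB' (fun b1 b2 hb => ?_) b
    show E (PB (IA (DKt k Y b1 b2))) = IB' (DKt k Y b1 b2)
    rw [hIA b1 b2 hb]
    have hne : (Sum.inr b1 : Ins X y Y) ≠ Sum.inr b2 := fun e => hb (Sum.inr.inj e)
    rw [hPB _ _ hne, fibsing1 b1, fibsing1 b2, Finset.sum_singleton, Finset.sum_singleton]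
    have hne2 : (Sum.inl ⟨Sum.inr b1, fun e => by cases e⟩ :
        Ins (Ins X y Y) (Sum.inl ⟨z, Ne.symm hyz⟩ : Ins X y Y) Z)
        ≠ Sum.inl ⟨Sum.inr b2, fun e => by cases e⟩ := by
      intro e
      exact hne (congrArg Subtype.val (Sum.inl.inj e))
    rw [hE _ _ hne2, hIB' b1 b2 hb]
    rfl
  -- part C
  have hC : ∀ c : DK k Z, E (IB c) = PB' (IA' c) := by
    intro c
    refine DK_homext k (E.comp IB) (PB'.comp IA') (fun c1 c2 hc => ?_) c
    show E (IB (DKt k Z c1 c2)) = PB' (IA' (DKt k Z c1 c2))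
    rw [hIB c1 c2 hc]
    have hne : (Sum.inr c1 : Ins (Ins X y Y) (Sum.inl ⟨z, Ne.symm hyz⟩ : Ins X y Y) Z)
        ≠ Sum.inr c2 := fun e => hc (Sum.inr.inj e)
    rw [hE _ _ hne]
    rw [hIA' c1 c2 hc]
    have hne' : (Sum.inr c1 : Ins X z Z) ≠ Sum.inr c2 := fun e => hc (Sum.inr.inj e)
    rw [hPB' _ _ hne', fibsing2 c1, fibsing2 c2, Finset.sum_singleton, Finset.sum_singleton]
    rfl
  intro a b c
  simp only [map_add]
  rw [hA a, hB b, hC c]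
  abel
end
end
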